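/- arXiv:alg-geom/9602008 — 2 statements merged into one kernel-verified Lean document; each statement's English description precedes it below -/
import Mathlib

section
/- For every integer n ≥ 1, setting k = 2n, the product over r = 1, …, 2n−1 of (4·sin²(rπ/(2n)))^{⌊r/2⌋} equals 2^{n−1}·n^n. -/
/-!
Pairing `r` with `2n - r`, under which `f_{2n}` is symmetric, squares the product into
`(∏ f_{2n}(r))^(n-1) · ∏_{r even} f_{2n}(r)`, because `⌊r/2⌋ + ⌊(2n-r)/2⌋` is `n` for even `r`
and `n - 1` for odd `r`. Both products are instances of `∏_{r=1}^{k-1} 4 sin²(rπ/k) = k²`,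
which is `‖∏_{r=1}^{k-1} (1 - ζ^r)‖² = k²` for a primitive `k`-th root of unity `ζ`.
-/

noncomputable def f (k : ℕ) (r : ℝ) : ℝ := 4 * Real.sin (r * Real.pi / k) ^ 2

open Finset Real

theorem f_eq_norm_one_sub_pow_sq (k r : ℕ) :
    f k r = ‖1 - Complex.exp (2 * π * Complex.I / k) ^ r‖ ^ 2 := by
  rw [← Complex.exp_nat_mul, norm_sub_rev,
    show (r : ℂ) * (2 * π * Complex.I / k) = Complex.I * ↑(2 * (r * π / k)) by push_cast; ring,
    Complex.norm_exp_I_mul_ofReal_sub_one, mul_div_cancel_left₀ _ two_ne_zero, Real.norm_eq_abs,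
    sq_abs, f]
  ring

theorem prod_f_eq_sq (k : ℕ) (hk : k ≠ 0) : ∏ r ∈ Icc 1 (k - 1), f k r = (k : ℝ) ^ 2 := by
  obtain ⟨m, rfl⟩ := Nat.exists_eq_add_one_of_ne_zero hk
  have hζ := Complex.isPrimitiveRoot_exp (m + 1) hk
  simp_rw [f_eq_norm_one_sub_pow_sq, prod_pow, ← norm_prod]
  rw [add_tsub_cancel_right, ← Ico_add_one_right_eq_Icc, prod_Ico_eq_prod_range,
    add_tsub_cancel_right]
  simp_rw [add_comm 1]
  rw [hζ.prod_one_sub_pow_eq_order]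
  norm_cast

theorem f_self_sub (k : ℕ) (r : ℝ) : f k (k - r) = f k r := by
  rcases eq_or_ne k 0 with rfl | hk
  · simp [f]
  · rw [f, f, sub_mul, sub_div, mul_div_cancel_left₀ _ (by exact_mod_cast hk), sin_pi_sub]

theorem f_mul_mul (c k : ℕ) (r : ℝ) (hc : c ≠ 0) : f (c * k) (c * r) = f k r := by
  rw [f, f, Nat.cast_mul, mul_assoc, mul_div_mul_left _ _ (Nat.cast_ne_zero.mpr hc)]

theorem prod_Icc_sub_reflect {M : Type*} [CommMonoid M] (g : ℕ → M) (k : ℕ) :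
    ∏ r ∈ Icc 1 (k - 1), g (k - r) = ∏ r ∈ Icc 1 (k - 1), g r := by
  refine prod_nbij' (k - ·) (k - ·) ?_ ?_ ?_ ?_ fun _ _ => rfl <;> intro r hr <;>
    simp only [mem_Icc] at * <;> omega

theorem prod_f_pow_reflect (k : ℕ) (e : ℕ → ℕ) :
    ∏ r ∈ Icc 1 (k - 1), f k r ^ e r = ∏ r ∈ Icc 1 (k - 1), f k r ^ e (k - r) := by
  rw [← prod_Icc_sub_reflect]
  refine prod_congr rfl fun r hr => ?_
  rw [Nat.cast_sub (by rw [mem_Icc] at hr; omega), f_self_sub]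

theorem Nat.div_two_add_sub_div_two (n r : ℕ) (hr : r ≤ 2 * n) :
    r / 2 + (2 * n - r) / 2 = if Even r then n else n - 1 := by
  split_ifs with h
  · obtain ⟨s, rfl⟩ := h; omega
  · obtain ⟨s, rfl⟩ := Nat.not_even_iff_odd.mp h; omega

theorem sq_prod_f_pow_div_two (n : ℕ) (hn : 1 ≤ n) :
    (∏ r ∈ Icc 1 (2 * n - 1), f (2 * n) r ^ (r / 2)) ^ 2
      = (∏ r ∈ Icc 1 (2 * n - 1), f (2 * n) r) ^ (n - 1)
        * ∏ r ∈ Icc 1 (2 * n - 1) with Even r, f (2 * n) r := by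
  rw [sq]
  nth_rw 2 [prod_f_pow_reflect]
  rw [← prod_mul_distrib, ← prod_pow, prod_filter, ← prod_mul_distrib]
  refine prod_congr rfl fun r hr => ?_
  rw [← pow_add, Nat.div_two_add_sub_div_two n r (by rw [mem_Icc] at hr; omega)]
  split_ifs
  · rw [← pow_succ, Nat.sub_add_cancel hn]
  · rw [mul_one]

theorem prod_filter_even_f (n : ℕ) (hn : n ≠ 0) :
    ∏ r ∈ Icc 1 (2 * n - 1) with Even r, f (2 * n) r = (n : ℝ) ^ 2 := by
  rw [← prod_f_eq_sq n hn]
  refine prod_nbij' (· / 2) (2 * ·) ?_ ?_ ?_ ?_ ?_ <;> intro r hr <;>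
    simp only [mem_filter, mem_Icc, Nat.even_iff] at * <;> try omega
  rw [← f_mul_mul 2 n _ two_ne_zero, ← Nat.cast_ofNat, ← Nat.cast_mul,
    Nat.mul_div_cancel' (by omega)]

/-- For every `n ≥ 1`, with `k = 2n`:
`∏_{r=1}^{2n-1} (4 sin²(rπ/(2n)))^⌊r/2⌋ = 2^{n-1} n^n`. -/
theorem prod_f_pow_even (n : ℕ) (hn : 1 ≤ n) :
    ∏ r ∈ Finset.Icc 1 (2 * n - 1), f (2 * n) (r : ℝ) ^ (r / 2)
      = 2 ^ (n - 1) * (n : ℝ) ^ n := by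
  refine (sq_eq_sq₀ (prod_nonneg fun r _ => by unfold f; positivity) (by positivity)).mp ?_
  rw [sq_prod_f_pow_div_two n hn, prod_f_eq_sq _ (by omega), prod_filter_even_f n (by omega)]
  obtain ⟨m, rfl⟩ := Nat.exists_eq_add_of_le' hn
  push_cast
  -- atoms for `ring`, which would otherwise expand `(2 * (m + 1)) ^ 2` inside an `m`-th power
  generalize (m : ℝ) + 1 = x
  generalize (2 : ℝ) = y
  ring
end

section
/- For every integer n ≥ 1, the product over all pairs 0 ≤ i < j ≤ n of f_{2n}(j−i)·f_{2n}(i+j) equals 4·(2n)^{n+1}, where f_k(r) = 4·sin²(rπ/k). -/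
/-!
Let `P(m) = fProd k m = f_k(1) ⋯ f_k(m)`. For fixed `j`, the factors `f(j - i)` run over
`f(1), …, f(j)` and the factors `f(i + j)` over `f(j), …, f(2j - 1)`, so the inner product is
`f(j) P(2j - 1)`.
Since `f_k(r) = |1 - ζʳ|²` for `ζ = e^{2πi/k}`, the identity `∏_{0<r<k} (1 - ζʳ) = k` gives
`P(k - 1) = k²`, and the symmetry `f_k(k - r) = f_k(r)` turns it into `P(m) P(k - 1 - m) = k²`.
For `k = 2n` this yields `P(n) = 4n`, and pairing `j` with `n + 1 - j` gives
`(∏_j P(2j - 1))² = (2n)^{2n} ∏_j f(2j - 1) = 4 (2n)^{2n}`: the odd-index values multiply to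
`P(2n - 1) / n² = 4`, because the even-index ones are `f_{2n}(2r) = f_n(r)`.
-/

open Finset Real

lemma f_eq_norm_exp_sub_one_sq (k : ℕ) (x : ℝ) :
    f k x = ‖Complex.exp (Complex.I * ↑(2 * π * x / k)) - 1‖ ^ 2 := by
  rw [Complex.norm_exp_I_mul_ofReal_sub_one, norm_mul, Real.norm_two, Real.norm_eq_abs, mul_pow,
    sq_abs, f]
  ring_nf

lemma f_sub_left (k : ℕ) (x : ℝ) : f k (k - x) = f k x := by
  rcases eq_or_ne k 0 with rfl | hk
  · simp [f]
  · have hk' : (k : ℝ) ≠ 0 := Nat.cast_ne_zero.mpr hk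
    rw [f, f, show (k - x) * π / k = π - x * π / k by field_simp, sin_pi_sub]

lemma f_two_mul (k : ℕ) (x : ℝ) : f (2 * k) (2 * x) = f k x := by
  rw [f, f, Nat.cast_mul, Nat.cast_two, mul_assoc, mul_div_mul_left _ _ two_ne_zero]

lemma f_two_mul_self {n : ℕ} (hn : n ≠ 0) : f (2 * n) n = 4 := by
  have hn' : (n : ℝ) ≠ 0 := Nat.cast_ne_zero.mpr hn
  rw [f, Nat.cast_mul, Nat.cast_two, show (n : ℝ) * π / (2 * n) = π / 2 by field_simp,
    sin_pi_div_two]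
  ring

lemma f_pos {k : ℕ} {x : ℝ} (hx : 0 < x) (hxk : x < k) : 0 < f k x := by
  have hk : (0 : ℝ) < k := hx.trans hxk
  have : 0 < sin (x * π / k) := by
    apply sin_pos_of_pos_of_lt_pi (by positivity)
    rw [div_lt_iff₀ hk]
    exact mul_lt_mul_of_pos_right hxk pi_pos |>.trans_eq (mul_comm _ _)
  unfold f
  positivity

noncomputable def fProd (k m : ℕ) : ℝ := ∏ r ∈ range m, f k (r + 1)

lemma fProd_succ (k m : ℕ) : fProd k (m + 1) = fProd k m * f k (m + 1) :=
  prod_range_succ _ _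

lemma fProd_pos {k m : ℕ} (hm : m < k) : 0 < fProd k m :=
  prod_pos fun r hr ↦ f_pos (by positivity) (by
    have := mem_range.mp hr
    exact_mod_cast (show r + 1 < k by omega))

lemma fProd_pred_self {k : ℕ} (hk : k ≠ 0) : fProd k (k - 1) = k ^ 2 := by
  obtain ⟨k, rfl⟩ := Nat.exists_eq_succ_of_ne_zero hk
  set ζ := Complex.exp (2 * π * Complex.I / (k + 1 : ℕ))
  have hζ : IsPrimitiveRoot ζ (k + 1) := Complex.isPrimitiveRoot_exp (k + 1) hk
  have hpow (r : ℕ) : ζ ^ (r + 1) =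
      Complex.exp (Complex.I * ↑(2 * π * (r + 1 : ℝ) / (k + 1 : ℕ))) := by
    rw [← Complex.exp_nat_mul]
    push_cast
    ring_nf
  calc fProd (k + 1) (k + 1 - 1) = ‖∏ r ∈ range k, (1 - ζ ^ (r + 1))‖ ^ 2 := by
        simp only [fProd, Nat.add_sub_cancel, norm_prod, ← prod_pow, hpow, norm_sub_rev (1 : ℂ),
          f_eq_norm_exp_sub_one_sq]
    _ = ((k + 1 : ℕ) : ℝ) ^ 2 := by
        rw [hζ.prod_one_sub_pow_eq_order]
        norm_cast

lemma fProd_mul_fProd_pred_sub {k m : ℕ} (hm : m < k) :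
    fProd k m * fProd k (k - 1 - m) = k ^ 2 := by
  induction m with
  | zero => rw [fProd, prod_range_zero, one_mul, Nat.sub_zero, fProd_pred_self (by omega)]
  | succ m ih =>
    have hsplit : fProd k (k - 1 - m) = fProd k (k - 1 - (m + 1)) * f k (m + 1) := by
      rw [show k - 1 - m = k - 1 - (m + 1) + 1 by omega, fProd_succ, ← f_sub_left k]
      congr 2
      push_cast [show m + 1 ≤ k - 1 by omega, show 1 ≤ k by omega]
      ring
    rw [← ih (by omega), hsplit, fProd_succ]
    ring

lemma fProd_mul_fProd_sub {k m : ℕ} (hm₀ : 0 < m) (hm : m ≤ k) :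
    fProd k m * fProd k (k - m) = k ^ 2 * f k m := by
  obtain ⟨m, rfl⟩ := Nat.exists_eq_add_one_of_ne_zero hm₀.ne'
  rw [← fProd_mul_fProd_pred_sub (show m < k by omega), fProd_succ,
    show k - (m + 1) = k - 1 - m by omega]
  push_cast
  ring

lemma fProd_two_mul_self {n : ℕ} (hn : n ≠ 0) : fProd (2 * n) n = 4 * n := by
  have h := fProd_mul_fProd_sub (k := 2 * n) (m := n) (by omega) (by omega)
  rw [show 2 * n - n = n by omega, f_two_mul_self hn] at h
  refine (pow_left_inj₀ (fProd_pos (by omega)).le (by positivity) two_ne_zero).mp ?_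
  rw [sq, h]
  push_cast
  ring

lemma fProd_two_mul_two_mul_add_one (n m : ℕ) :
    fProd (2 * n) (2 * m + 1) = (∏ j ∈ range (m + 1), f (2 * n) (2 * j + 1)) * fProd n m := by
  induction m with
  | zero => simp [fProd]
  | succ m ih =>
    rw [show 2 * (m + 1) + 1 = 2 * m + 1 + 1 + 1 by ring, fProd_succ, fProd_succ, ih,
      prod_range_succ _ (m + 1), fProd_succ, ← f_two_mul n]
    push_cast
    ring_nf

lemma prod_range_f_two_mul_add_one {n : ℕ} (hn : n ≠ 0) :
    ∏ j ∈ range n, f (2 * n) (2 * j + 1) = 4 := by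
  obtain ⟨m, rfl⟩ := Nat.exists_eq_add_one_of_ne_zero hn
  have hodd := fProd_pred_self (k := 2 * (m + 1)) (by omega)
  have heven := fProd_pred_self (k := m + 1) (by omega)
  rw [Nat.add_sub_cancel] at heven
  rw [show 2 * (m + 1) - 1 = 2 * m + 1 by omega, fProd_two_mul_two_mul_add_one, heven] at hodd
  have hm : ((m + 1 : ℕ) : ℝ) ^ 2 ≠ 0 := by positivity
  refine mul_right_cancel₀ hm (hodd.trans ?_)
  push_cast
  ring

lemma prod_range_fProd_two_mul_add_one {n : ℕ} (hn : n ≠ 0) :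
    ∏ j ∈ range n, fProd (2 * n) (2 * j + 1) = 2 * (2 * n) ^ n := by
  set Q := ∏ j ∈ range n, fProd (2 * n) (2 * j + 1)
  have hQ : Q ^ 2 = (2 * (2 * n : ℝ) ^ n) ^ 2 :=
    calc Q ^ 2
        = ∏ j ∈ range n, fProd (2 * n) (2 * j + 1) * fProd (2 * n) (2 * (n - 1 - j) + 1) := by
          rw [sq, prod_mul_distrib, prod_range_reflect (fun j ↦ fProd (2 * n) (2 * j + 1))]
      _ = ∏ j ∈ range n, (2 * n : ℝ) ^ 2 * f (2 * n) (2 * j + 1) := by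
          refine prod_congr rfl fun j hj ↦ ?_
          have hj := mem_range.mp hj
          rw [show 2 * (n - 1 - j) + 1 = 2 * n - (2 * j + 1) by omega,
            fProd_mul_fProd_sub (by omega) (by omega)]
          push_cast
          rfl
      _ = (2 * (2 * n : ℝ) ^ n) ^ 2 := by
          rw [prod_mul_distrib, prod_const, card_range, prod_range_f_two_mul_add_one hn,
            ← pow_mul, mul_pow _ (_ ^ n), ← pow_mul]
          ring
  have hQ₀ : 0 < Q := prod_pos fun j hj ↦ fProd_pos (by have := mem_range.mp hj; omega)
  exact (pow_left_inj₀ hQ₀.le (by positivity) two_ne_zero).mp hQ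

lemma prod_range_f_sub_mul_f_add (k j : ℕ) :
    ∏ i ∈ range (j + 1), f k ((j + 1 : ℕ) - i) * f k (i + (j + 1 : ℕ)) =
      f k (j + 1) * fProd k (2 * j + 1) := by
  have hsub : ∏ i ∈ range (j + 1), f k ((j + 1 : ℕ) - i) = fProd k (j + 1) := by
    rw [fProd, ← prod_range_reflect]
    refine prod_congr rfl fun i hi ↦ ?_
    push_cast [show i ≤ j by have := mem_range.mp hi; omega]
    congr 1
    ring
  have hadd :
      fProd k (2 * j + 1) = fProd k j * ∏ i ∈ range (j + 1), f k (i + (j + 1 : ℕ)) := by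
    rw [fProd, show 2 * j + 1 = j + (j + 1) by ring, prod_range_add]
    congr 1
    refine prod_congr rfl fun i _ ↦ ?_
    push_cast
    congr 1
    ring
  rw [prod_mul_distrib, hsub, hadd, fProd_succ]
  ring

/-- For every `n ≥ 1`: `∏_{0 ≤ i < j ≤ n} f_{2n}(j-i) f_{2n}(i+j) = 4 (2n)^{n+1}`. -/
theorem prod_pairs_numerator (n : ℕ) (hn : 1 ≤ n) :
    ∏ j ∈ Finset.range (n + 1), ∏ i ∈ Finset.range j,
        f (2 * n) ((j : ℝ) - (i : ℝ)) * f (2 * n) ((i : ℝ) + (j : ℝ))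
      = 4 * (2 * n : ℝ) ^ (n + 1) := by
  have hn₀ : n ≠ 0 := by omega
  rw [prod_range_succ', prod_range_zero, mul_one,
    prod_congr rfl fun j _ ↦ prod_range_f_sub_mul_f_add (2 * n) j, prod_mul_distrib]
  change fProd (2 * n) n * _ = _
  rw [fProd_two_mul_self hn₀, prod_range_fProd_two_mul_add_one hn₀]
  ring
end
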